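/- arXiv:2501.01179 — 3 statements merged into one kernel-verified Lean document; each statement's English description precedes it below -/
import Mathlib

section
/- Let k be a field of characteristic p > 0 and n ≥ 2. On k[u₁, …, uₙ] consider the derivation ψ = u₁·∂/∂u₁ + Σ_{i=2}^{n} (−uᵢ + uᵢ²)·∂/∂uᵢ. Then ψ^[p] = ψ. -/
/-!
In characteristic `p` the `p`-th iterate of a derivation is again a derivation, because the
binomial coefficients `p.choose i` with `0 < i < p` vanish in the iterated Leibniz rule. So it
suffices to compare `ψ^[p]` and `ψ` on the variables. `ψ` fixes `u₁`. For `x = uᵢ` with `i ≥ 2`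
we have `ψ x = x² - x`, and `q = (x - 1) x^(p-1)` is an eigenvector: `ψ q = q`, hence `ψ^[p] q = q`.
Every derivation `Δ` sends `q` to `x^(p-2) Δ x`, so comparing `Δ = ψ^[p]` with `Δ = ψ` on `q` and
cancelling `x^(p-2)` gives `ψ^[p] x = ψ x`.
-/

open Finset

namespace Derivation

variable {R A : Type*} [CommSemiring R] [CommRing A] [Algebra R A]

theorem iterate_leibniz (D : Derivation R A A) (n : ℕ) (a b : A) :
    D^[n] (a * b) = ∑ ij ∈ antidiagonal n, n.choose ij.1 • (D^[ij.1] a * D^[ij.2] b) := by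
  induction n with
  | zero => simp
  | succ n ih =>
    rw [sum_antidiagonal_choose_succ_nsmul (M := A) (fun i j => D^[i] a * D^[j] b) n]
    simp only [Function.iterate_succ_apply', ih, map_sum, map_nsmul, leibniz, smul_eq_mul,
      smul_add, sum_add_distrib]
    congr 1
    refine sum_congr rfl fun ij hij => ?_
    rw [n.choose_symm_of_eq_add (mem_antidiagonal.1 hij).symm, mul_comm]

variable (D : Derivation R A A) (p : ℕ) [Fact p.Prime] [CharP A p]

theorem iterate_charP_leibniz (a b : A) :
    D^[p] (a * b) = a * D^[p] b + b * D^[p] a := by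
  have hp := (Fact.out : p.Prime)
  rw [iterate_leibniz, sum_eq_add (0, p) (p, 0) (by simp [hp.ne_zero])]
  · simp [add_comm, mul_comm]
  · rintro ⟨i, j⟩ hij ⟨h0p, hp0⟩
    replace hij := mem_antidiagonal.1 hij
    have hi : i ≠ 0 := by rintro rfl; simp_all
    have hj : j ≠ 0 := by rintro rfl; simp_all
    rw [nsmul_eq_mul, (CharP.cast_eq_zero_iff A p _).2 (hp.dvd_choose_self hi (by omega)),
      zero_mul]
  all_goals simp

def iterateCharP : Derivation R A A :=
  mk' ((D : A →ₗ[R] A) ^ p) fun a b => by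
    simp only [Module.End.coe_pow, coeFn_coe, smul_eq_mul, iterate_charP_leibniz]

@[simp]
theorem coe_iterateCharP : ⇑(D.iterateCharP p) = (⇑D)^[p] := by
  simp [iterateCharP, Module.End.coe_pow]

theorem apply_sub_one_mul_pow_pred (x : A) :
    D ((x - 1) * x ^ (p - 1)) = x ^ (p - 2) * D x := by
  obtain ⟨r, rfl⟩ : ∃ r, p = r + 2 := ⟨p - 2, by have := (Fact.out : p.Prime).two_le; omega⟩
  have hp : ((r + 2 : ℕ) : A) = 0 := CharP.cast_eq_zero A _
  simp only [leibniz, leibniz_pow, map_sub, map_one_eq_zero, smul_eq_mul, nsmul_eq_mul,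
    Nat.add_sub_cancel, show r + 2 - 1 = r + 1 by omega]
  push_cast at hp ⊢
  linear_combination (x - 1) * x ^ r * D x * hp

theorem iterate_charP_apply_of_apply_eq_sq_sub [IsDomain A] {x : A}
    (hx : D x = x ^ 2 - x) : D^[p] x = x ^ 2 - x := by
  rcases eq_or_ne x 0 with rfl | hx0
  · simp
  have hq : D ((x - 1) * x ^ (p - 1)) = (x - 1) * x ^ (p - 1) := by
    obtain ⟨r, rfl⟩ : ∃ r, p = r + 2 := ⟨p - 2, by have := (Fact.out : p.Prime).two_le; omega⟩
    rw [apply_sub_one_mul_pow_pred, hx, show r + 2 - 1 = r + 1 by omega, Nat.add_sub_cancel]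
    ring
  have hqp := (D.iterateCharP p).apply_sub_one_mul_pow_pred p x
  rw [coe_iterateCharP, Function.iterate_fixed hq, ← hq, apply_sub_one_mul_pow_pred, hx] at hqp
  exact mul_left_cancel₀ (pow_ne_zero _ hx0) hqp.symm

end Derivation

namespace MvPolynomial

variable {R σ : Type*} [CommSemiring R] [Fintype σ] (c : σ → MvPolynomial σ R)

theorem sum_smul_pderiv_apply (f : MvPolynomial σ R) :
    (∑ i, c i • pderiv i : Derivation R (MvPolynomial σ R) (MvPolynomial σ R)) f =
      ∑ i, c i * pderiv i f := by
  rw [← Derivation.coeFnAddMonoidHom_apply, map_sum, Finset.sum_apply]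
  simp [Derivation.coeFnAddMonoidHom_apply]

theorem sum_smul_pderiv_X [DecidableEq σ] (j : σ) :
    (∑ i, c i • pderiv i : Derivation R (MvPolynomial σ R) (MvPolynomial σ R)) (X j) = c j := by
  simp [sum_smul_pderiv_apply, pderiv_X, Pi.single_apply]

end MvPolynomial

open MvPolynomial

/-- Over a field `k` of characteristic `p > 0` and `n ≥ 2` (here
`n + 2` variables with `n : ℕ` arbitrary), the derivation
`ψ = u₁ ∂/∂u₁ + Σ_{i=2}^{n} (−uᵢ + uᵢ²) ∂/∂uᵢ` on `k[u₁,…,uₙ]` satisfies `ψ^[p] = ψ`. -/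
theorem statement5 {k : Type*} [Field k] (p n : ℕ) [Fact p.Prime] [CharP k p]
    (f : MvPolynomial (Fin (n + 2)) k) :
    (fun g : MvPolynomial (Fin (n + 2)) k =>
        ∑ i, (if i = 0 then X i else -X i + X i ^ 2) * pderiv i g)^[p] f
      = ∑ i, (if i = 0 then X i else -X i + X i ^ 2) * pderiv i f := by
  let c : Fin (n + 2) → MvPolynomial (Fin (n + 2)) k := fun i =>
    if i = 0 then X i else -X i + X i ^ 2
  let ψ : Derivation k (MvPolynomial (Fin (n + 2)) k) (MvPolynomial (Fin (n + 2)) k) :=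
    ∑ i, c i • pderiv i
  have hψ : (fun g => ∑ i, c i * pderiv i g) = ⇑ψ := (funext (sum_smul_pderiv_apply c)).symm
  rw [hψ, ← sum_smul_pderiv_apply c, ← ψ.coe_iterateCharP p]
  suffices ψ.iterateCharP p = ψ from DFunLike.congr_fun this f
  refine derivation_ext fun i => ?_
  have hψX : ∀ i, ψ (X i) = c i := sum_smul_pderiv_X c
  rw [ψ.coe_iterateCharP p, hψX]
  rcases eq_or_ne i 0 with rfl | hi
  · exact Function.iterate_fixed (hψX 0) p
  · have hψXi : ψ (X i) = X i ^ 2 - X i := by rw [hψX]; simp [c, hi]; ring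
    rw [ψ.iterate_charP_apply_of_apply_eq_sq_sub p hψXi, ← hψXi, hψX]
end

section
/- Let k be a field of characteristic 2. Consider the derivation ∂ = x²·∂/∂x + t·∂/∂y on R = k[x, y, t]. Then the ring of ∂-invariants R^∂ = {f ∈ R : ∂(f) = 0} equals the k-subalgebra generated by x², y², t, and tx + x²y. -/
/-!
Comparing coefficients in `∂f = 0` (characteristic 2, so `(n + 1 : k)` is `1` or `0` according to
the parity of `n`) shows that `f` has no term `x^odd y^odd`, no term `y^odd t^c` free of `x`, no
term `x^odd y^even` free of `t`, and that the terms `x^(2a+1) y^(2b) t^(c+1)` and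
`x^(2a+2) y^(2b+1) t^c` have equal coefficients. These two monomials are exactly the terms of
`x^(2a) y^(2b) t^c (tx + x²y)`, and every remaining term is a monomial in `x², y², t`.
Subtracting such a piece of `f` strictly shrinks its support, so induction on the support puts `f`
in the algebra. Conversely `∂` kills squares in characteristic 2, `t` and `tx + x²y`.
-/

open MvPolynomial

namespace MvPolynomial

variable {σ R : Type*} [CommRing R]

def IsSubsum (p f : MvPolynomial σ R) : Prop :=
  ∀ n ∈ p.support, coeff n p = coeff n f

theorem IsSubsum.support_subset {p f : MvPolynomial σ R} (h : IsSubsum p f) :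
    p.support ⊆ f.support := fun n hn => by
  rw [mem_support_iff, ← h n hn]
  exact mem_support_iff.mp hn

theorem IsSubsum.support_sub_subset [DecidableEq σ] {p f : MvPolynomial σ R} (h : IsSubsum p f) :
    (f - p).support ⊆ f.support \ p.support := by
  intro n hn
  rw [mem_support_iff, coeff_sub] at hn
  have hnp : n ∉ p.support := fun hnp => hn (by rw [h n hnp, sub_self])
  rw [notMem_support_iff.mp hnp, sub_zero] at hn
  exact Finset.mem_sdiff.mpr ⟨mem_support_iff.mpr hn, hnp⟩

theorem isSubsum_monomial_coeff (f : MvPolynomial σ R) (m : σ →₀ ℕ) :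
    IsSubsum (monomial m (coeff m f)) f := by
  classical
  intro n hn
  rw [mem_support_iff, coeff_monomial] at hn
  rw [coeff_monomial]
  split_ifs at hn ⊢ with h
  · rw [h]
  · exact absurd rfl hn

theorem isSubsum_monomial_add_monomial (f : MvPolynomial σ R) {m m' : σ →₀ ℕ}
    (hm : m ≠ m') (h : coeff m' f = coeff m f) :
    IsSubsum (monomial m (coeff m f) + monomial m' (coeff m f)) f := by
  classical
  intro n hn
  rw [mem_support_iff, coeff_add, coeff_monomial, coeff_monomial] at hn
  rw [coeff_add, coeff_monomial, coeff_monomial]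
  split_ifs at hn ⊢ with h1 h2 <;> simp_all

theorem le_of_forall_exists_isSubsum {S K : Submodule R (MvPolynomial σ R)} (hSK : S ≤ K)
    (h : ∀ f ∈ K, f ≠ 0 → ∃ p ∈ S, p ≠ 0 ∧ IsSubsum p f) : K ≤ S := by
  classical
  intro f hf
  induction hN : f.support.card using Nat.strong_induction_on generalizing f with
  | _ N ih =>
    rcases eq_or_ne f 0 with rfl | hf0
    · exact zero_mem S
    obtain ⟨p, hpS, hp0, hpf⟩ := h f hf hf0
    have hlt : (f - p).support.card < N :=
      hN ▸ (Finset.card_le_card hpf.support_sub_subset).trans_lt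
        (Finset.card_lt_card (Finset.sdiff_ssubset hpf.support_subset (support_nonempty.mpr hp0)))
    simpa using add_mem (ih _ hlt (sub_mem hf (hSK hpS)) rfl) hpS

end MvPolynomial

theorem Derivation.map_sq_eq_zero_of_charTwo {k A : Type*} [CommRing k] [CommRing A] [Algebra k A]
    [CharP A 2] (D : Derivation k A A) (a : A) : D (a ^ 2) = 0 := by
  rw [D.leibniz_pow, two_nsmul, CharTwo.add_self_eq_zero]

namespace CharTwoInvariants

noncomputable def D (k : Type*) [CommRing k] :
    Derivation k (MvPolynomial (Fin 3) k) (MvPolynomial (Fin 3) k) :=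
  (X 0 ^ 2 : MvPolynomial (Fin 3) k) • pderiv 0 + (X 2 : MvPolynomial (Fin 3) k) • pderiv 1

def gens (k : Type*) [CommRing k] : Set (MvPolynomial (Fin 3) k) :=
  {X 0 ^ 2, X 1 ^ 2, X 2, X 2 * X 0 + X 0 ^ 2 * X 1}

variable {k : Type*} [CommRing k]

theorem D_apply (f : MvPolynomial (Fin 3) k) :
    D k f = X 0 ^ 2 * pderiv 0 f + X 2 * pderiv 1 f :=
  rfl

noncomputable def exps (a b c : ℕ) : Fin 3 →₀ ℕ :=
  Finsupp.single 0 a + Finsupp.single 1 b + Finsupp.single 2 c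

theorem exps_add (a b c a' b' c' : ℕ) :
    exps a b c + exps a' b' c' = exps (a + a') (b + b') (c + c') := by
  simp only [exps, Finsupp.single_add]
  abel

theorem eq_exps (m : Fin 3 →₀ ℕ) : m = exps (m 0) (m 1) (m 2) := by
  ext i
  fin_cases i <;> simp [exps]

@[simp] theorem exps_inj {a b c a' b' c' : ℕ} :
    exps a b c = exps a' b' c' ↔ a = a' ∧ b = b' ∧ c = c' := by
  refine ⟨fun h => ⟨?_, ?_, ?_⟩, by rintro ⟨rfl, rfl, rfl⟩; rfl⟩ <;>
  [have := congr($h 0); have := congr($h 1); have := congr($h 2)] <;> simpa [exps] using this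

theorem X_zero_eq_monomial_exps : (X 0 : MvPolynomial (Fin 3) k) = monomial (exps 1 0 0) 1 := by
  simp [exps, X]

theorem X_one_eq_monomial_exps : (X 1 : MvPolynomial (Fin 3) k) = monomial (exps 0 1 0) 1 := by
  simp [exps, X]

theorem X_two_eq_monomial_exps : (X 2 : MvPolynomial (Fin 3) k) = monomial (exps 0 0 1) 1 := by
  simp [exps, X]

theorem X_zero_sq_eq_monomial_exps :
    (X 0 ^ 2 : MvPolynomial (Fin 3) k) = monomial (exps 2 0 0) 1 := by
  simp [exps, X_pow_eq_monomial]

theorem coeff_exps_pderiv_zero (f : MvPolynomial (Fin 3) k) (a b c : ℕ) :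
    coeff (exps a b c) (pderiv 0 f) = coeff (exps (a + 1) b c) f * (a + 1) := by
  rw [coeff_pderiv]
  congr 2 <;> simp [exps, Finsupp.single_add]
  abel

theorem coeff_exps_pderiv_one (f : MvPolynomial (Fin 3) k) (a b c : ℕ) :
    coeff (exps a b c) (pderiv 1 f) = coeff (exps a (b + 1) c) f * (b + 1) := by
  rw [coeff_pderiv]
  congr 2 <;> simp [exps, Finsupp.single_add]
  abel

theorem coeff_D_exps (f : MvPolynomial (Fin 3) k) (a b c : ℕ) :
    coeff (exps (a + 2) b (c + 1)) (D k f) =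
      coeff (exps (a + 1) b (c + 1)) f * (a + 1) + coeff (exps (a + 2) (b + 1) c) f * (b + 1) := by
  have hx : exps (a + 2) b (c + 1) = exps 2 0 0 + exps a b (c + 1) := by
    rw [exps_add]; congr 1 <;> omega
  have ht : exps (a + 2) b (c + 1) = exps 0 0 1 + exps (a + 2) b c := by
    rw [exps_add]; congr 1 <;> omega
  rw [D_apply, coeff_add, X_zero_sq_eq_monomial_exps, X_two_eq_monomial_exps]
  congr 1
  · rw [hx, coeff_monomial_mul, one_mul, coeff_exps_pderiv_zero]
  · rw [ht, coeff_monomial_mul, one_mul, coeff_exps_pderiv_one]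

theorem coeff_D_exps_t_pow_zero (f : MvPolynomial (Fin 3) k) (a b : ℕ) :
    coeff (exps (a + 2) b 0) (D k f) = coeff (exps (a + 1) b 0) f * (a + 1) := by
  have hx : exps (a + 2) b 0 = exps 2 0 0 + exps a b 0 := by
    rw [exps_add]; congr 1 <;> omega
  have ht : ¬exps 0 0 1 ≤ exps (a + 2) b 0 := fun h => by
    simpa [exps] using Finsupp.le_def.1 h 2
  rw [D_apply, coeff_add, X_zero_sq_eq_monomial_exps, X_two_eq_monomial_exps,
    coeff_monomial_mul' _ (exps 0 0 1), if_neg ht, add_zero, hx, coeff_monomial_mul, one_mul,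
    coeff_exps_pderiv_zero]

theorem coeff_D_exps_x_pow_zero (f : MvPolynomial (Fin 3) k) (b c : ℕ) :
    coeff (exps 0 b (c + 1)) (D k f) = coeff (exps 0 (b + 1) c) f * (b + 1) := by
  have hx : ¬exps 2 0 0 ≤ exps 0 b (c + 1) := fun h => by
    simpa [exps] using Finsupp.le_def.1 h 0
  have ht : exps 0 b (c + 1) = exps 0 0 1 + exps 0 b c := by
    rw [exps_add]; congr 1 <;> omega
  rw [D_apply, coeff_add, X_zero_sq_eq_monomial_exps, X_two_eq_monomial_exps,
    coeff_monomial_mul' _ (exps 2 0 0), if_neg hx, zero_add, ht, coeff_monomial_mul, one_mul,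
    coeff_exps_pderiv_one]

theorem monomial_exps_mul (a b c : ℕ) (r : k) :
    monomial (exps a b c) r * (X 2 * X 0 + X 0 ^ 2 * X 1) =
      monomial (exps (a + 1) b (c + 1)) r + monomial (exps (a + 2) (b + 1) c) r := by
  rw [X_zero_sq_eq_monomial_exps, X_zero_eq_monomial_exps, X_one_eq_monomial_exps,
    X_two_eq_monomial_exps, monomial_mul, monomial_mul,
    mul_add, monomial_mul, monomial_mul, exps_add, exps_add, exps_add, exps_add]
  simp only [mul_one, add_zero, zero_add]

theorem monomial_exps_mem_adjoin (a b c : ℕ) (r : k) :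
    monomial (exps (2 * a) (2 * b) c) r ∈ Algebra.adjoin k (gens k) := by
  have hmon : monomial (exps (2 * a) (2 * b) c) r =
      C r * ((X 0 ^ 2) ^ a * (X 1 ^ 2) ^ b * X 2 ^ c) := by
    rw [← pow_mul, ← pow_mul, X_pow_eq_monomial, X_pow_eq_monomial, X_pow_eq_monomial,
      monomial_mul, monomial_mul, C_mul_monomial, mul_one, mul_one, mul_one, exps]
  have hgen {g} (hg : g ∈ gens k) : g ∈ Algebra.adjoin k (gens k) := Algebra.subset_adjoin hg
  rw [hmon]
  exact mul_mem (Subalgebra.algebraMap_mem _ r) <| mul_mem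
    (mul_mem (pow_mem (hgen (by simp [gens])) a) (pow_mem (hgen (by simp [gens])) b))
    (pow_mem (hgen (by simp [gens])) c)

variable [CharP k 2] {f : MvPolynomial (Fin 3) k}

theorem D_eq_zero_of_mem_gens (hf : f ∈ gens k) : D k f = 0 := by
  have hX0 : D k (X 0) = X 0 ^ 2 := by simp [D_apply, pderiv_X]
  have hX1 : D k (X 1) = X 2 := by simp [D_apply, pderiv_X]
  have hX2 : D k (X 2) = 0 := by simp [D_apply, pderiv_X]
  rcases hf with rfl | rfl | rfl | rfl
  · exact (D k).map_sq_eq_zero_of_charTwo _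
  · exact (D k).map_sq_eq_zero_of_charTwo _
  · exact hX2
  · simp only [map_add, Derivation.leibniz, (D k).map_sq_eq_zero_of_charTwo, hX0, hX1, hX2,
      smul_eq_mul]
    linear_combination
      (X 0 ^ 2 * X 2 : MvPolynomial (Fin 3) k) * CharTwo.two_eq_zero (R := MvPolynomial (Fin 3) k)

theorem D_eq_zero_of_mem_adjoin (hf : f ∈ Algebra.adjoin k (gens k)) : D k f = 0 :=
  (D k).eqOn_adjoin (D2 := 0) (fun _ hg => D_eq_zero_of_mem_gens hg) hf

theorem coeff_exps_odd_odd (hf : D k f = 0) (a b c : ℕ) :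
    coeff (exps (2 * a + 1) (2 * b + 1) c) f = 0 := by
  cases c with
  | zero =>
    have h := congr(coeff (exps (2 * a + 2) (2 * b + 1) 0) $hf)
    rw [coeff_D_exps_t_pow_zero] at h
    simpa [CharTwo.natCast_eq_ite, parity_simps, CharTwo.add_self_eq_zero] using h
  | succ c =>
    have h := congr(coeff (exps (2 * a + 2) (2 * b + 1) (c + 1)) $hf)
    rw [coeff_D_exps] at h
    simpa [CharTwo.natCast_eq_ite, parity_simps, CharTwo.add_self_eq_zero] using h

theorem coeff_exps_zero_odd (hf : D k f = 0) (b c : ℕ) : coeff (exps 0 (2 * b + 1) c) f = 0 := by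
  have h := congr(coeff (exps 0 (2 * b) (c + 1)) $hf)
  rw [coeff_D_exps_x_pow_zero] at h
  simpa [CharTwo.natCast_eq_ite, parity_simps, CharTwo.add_self_eq_zero] using h

theorem coeff_exps_odd_even_zero (hf : D k f = 0) (a b : ℕ) :
    coeff (exps (2 * a + 1) (2 * b) 0) f = 0 := by
  have h := congr(coeff (exps (2 * a + 2) (2 * b) 0) $hf)
  rw [coeff_D_exps_t_pow_zero] at h
  simpa [CharTwo.natCast_eq_ite, parity_simps, CharTwo.add_self_eq_zero] using h

theorem coeff_exps_odd_even_succ (hf : D k f = 0) (a b c : ℕ) :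
    coeff (exps (2 * a + 1) (2 * b) (c + 1)) f = coeff (exps (2 * a + 2) (2 * b + 1) c) f := by
  have h := congr(coeff (exps (2 * a + 2) (2 * b) (c + 1)) $hf)
  rw [coeff_D_exps] at h
  simpa [CharTwo.natCast_eq_ite, parity_simps, CharTwo.add_self_eq_zero,
    CharTwo.add_eq_iff_eq_add] using h

theorem exists_isSubsum_monomial_exps_mul (hf : D k f = 0) (a b c : ℕ)
    (h : coeff (exps (2 * a + 1) (2 * b) (c + 1)) f ≠ 0) :
    ∃ p ∈ Algebra.adjoin k (gens k), p ≠ 0 ∧ IsSubsum p f := by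
  refine ⟨monomial (exps (2 * a) (2 * b) c) (coeff (exps (2 * a + 1) (2 * b) (c + 1)) f) *
    (X 2 * X 0 + X 0 ^ 2 * X 1), mul_mem (monomial_exps_mem_adjoin a b c _)
    (Algebra.subset_adjoin (by simp [gens])), ?_⟩
  rw [monomial_exps_mul]
  refine ⟨fun h0 => h ?_,
    isSubsum_monomial_add_monomial f (by simp) (coeff_exps_odd_even_succ hf a b c).symm⟩
  simpa [coeff_monomial] using congr(coeff (exps (2 * a + 1) (2 * b) (c + 1)) $h0)

theorem exists_isSubsum_of_D_eq_zero (hf : D k f = 0) (hf0 : f ≠ 0) :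
    ∃ p ∈ Algebra.adjoin k (gens k), p ≠ 0 ∧ IsSubsum p f := by
  obtain ⟨m, hm⟩ := support_nonempty.2 hf0
  rw [mem_support_iff, eq_exps m] at hm
  generalize m 0 = x, m 1 = y, m 2 = c at hm
  obtain ⟨a, rfl | rfl⟩ := Nat.even_or_odd' x <;>
    obtain ⟨b, rfl | rfl⟩ := Nat.even_or_odd' y
  · exact ⟨_, monomial_exps_mem_adjoin a b c _, monomial_eq_zero.not.2 hm,
      isSubsum_monomial_coeff f _⟩
  · obtain _ | a := a
    · exact absurd (coeff_exps_zero_odd hf b c) hm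
    · rw [mul_add_one, ← coeff_exps_odd_even_succ hf] at hm
      exact exists_isSubsum_monomial_exps_mul hf a b c hm
  · obtain _ | c := c
    · exact absurd (coeff_exps_odd_even_zero hf a b) hm
    · exact exists_isSubsum_monomial_exps_mul hf a b c hm
  · exact absurd (coeff_exps_odd_odd hf a b c) hm

theorem mem_adjoin_gens_iff : f ∈ Algebra.adjoin k (gens k) ↔ D k f = 0 :=
  ⟨D_eq_zero_of_mem_adjoin, fun hf =>
    le_of_forall_exists_isSubsum (S := Subalgebra.toSubmodule (Algebra.adjoin k (gens k)))
      (K := LinearMap.ker (D k).toLinearMap) (fun _ hp => D_eq_zero_of_mem_adjoin hp)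
      (fun _ hg hg0 => exists_isSubsum_of_D_eq_zero hg hg0) hf⟩

end CharTwoInvariants

/-- Let `k` be a field of characteristic `2` and `R = k[x, y, t]`
(`x = X 0`, `y = X 1`, `t = X 2`).  For the derivation `∂ = x² ∂/∂x + t ∂/∂y`, the
ring of `∂`-invariants is exactly the `k`-subalgebra generated by
`x²`, `y²`, `t` and `tx + x²y`. -/
theorem statement9 {k : Type*} [Field k] [CharP k 2] (f : MvPolynomial (Fin 3) k) :
    X 0 ^ 2 * pderiv 0 f + X 2 * pderiv 1 f = 0 ↔
      f ∈ Algebra.adjoin k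
        ({X 0 ^ 2, X 1 ^ 2, X 2, X 2 * X 0 + X 0 ^ 2 * X 1} :
          Set (MvPolynomial (Fin 3) k)) :=
  CharTwoInvariants.mem_adjoin_gens_iff.symm
end

section
/- Let k be a field of characteristic p > 0 and n ≥ 2, m ≥ 1. On R = k[x₁, …, xₙ, y, t], consider ∂ₘ = Σᵢ xᵢ²·∂/∂xᵢ + tᵐ·∂/∂y. Then there is no f in the localization of R at the maximal ideal (x₁, …, xₙ, y, t) such that ∂ₘ(y + t·f) = 0. Consequently y does not lift to a ∂ₘ-invariant element modulo t near the origin. -/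
open MvPolynomial

/-- The derivation `∂₁ = Σᵢ xᵢ² ∂/∂xᵢ + t ∂/∂y` on `k[x₁,…,xₙ,y,t]`, where the
variables are indexed by `Fin n ⊕ Fin 2` with `y = X (inr 0)` and `t = X (inr 1)`. -/
noncomputable def statement11Derivation (k : Type*) [Field k] (n : ℕ) :
    Derivation k (MvPolynomial (Fin n ⊕ Fin 2) k) (MvPolynomial (Fin n ⊕ Fin 2) k) :=
  MvPolynomial.mkDerivation k
    (Sum.elim (fun i : Fin n => X (Sum.inl i) ^ 2)
      (fun j : Fin 2 => if j = 0 then X (Sum.inr 1) else 0))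

/-- The constant coefficient of `∂₁ h` vanishes for every `h`. -/
lemma statement11_constantCoeff_deriv {k : Type*} [Field k] (n : ℕ)
    (h : MvPolynomial (Fin n ⊕ Fin 2) k) :
    constantCoeff (statement11Derivation k n h) = 0 := by
  induction h using MvPolynomial.induction_on with
  | C a => simp
  | add p q hp hq => simp [hp, hq]
  | mul_X p i hp =>
    rw [Derivation.leibniz]
    simp only [smul_eq_mul, map_add, map_mul, hp, mul_zero, zero_add, add_zero]
    have : constantCoeff (statement11Derivation k n (X i)) = 0 := by
      rw [statement11Derivation, mkDerivation_X]
      rcases i with i | j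
      · simp
      · by_cases hj : j = 0 <;> simp [hj]
    simp [this]

/-- A polynomial with vanishing constant coefficient lies in the ideal generated by
the variables. -/
lemma statement11_mem_span {k : Type*} [Field k] (n : ℕ)
    (g : MvPolynomial (Fin n ⊕ Fin 2) k) (hg : constantCoeff g = 0) :
    g ∈ Ideal.span
      (Set.range (X : Fin n ⊕ Fin 2 → MvPolynomial (Fin n ⊕ Fin 2) k)) := by
  rw [MvPolynomial.as_sum g]
  refine Ideal.sum_mem _ fun m hm => ?_
  have hm0 : m ≠ 0 := by
    rintro rfl
    rw [MvPolynomial.mem_support_iff] at hm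
    exact hm (by simpa [MvPolynomial.constantCoeff_eq] using hg)
  obtain ⟨i, hi⟩ : ∃ i, m i ≠ 0 := by
    by_contra h
    push_neg at h
    exact hm0 (Finsupp.ext h)
  have hdvd : (X i : MvPolynomial (Fin n ⊕ Fin 2) k) ∣ monomial m (coeff m g) :=
    MvPolynomial.X_dvd_monomial.2 (Or.inr hi)
  obtain ⟨c, hc⟩ := hdvd
  rw [hc]
  exact Ideal.mul_mem_right _ _ (Ideal.subset_span ⟨i, rfl⟩)

/-- case `m = 1`.  Let `k` be a field of characteristic `p > 0`,
`n ≥ 2`, and `∂₁ = Σᵢ xᵢ² ∂/∂xᵢ + t ∂/∂y` on `R = k[x₁,…,xₙ,y,t]`.  There is no element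
`f/g` (with `g` outside the maximal ideal `𝔪 = (x₁,…,xₙ,y,t)`, so that `f/g` is a
general element of the localization `R_𝔪`) with `∂₁(y + t·(f/g)) = 0`: clearing
denominators, `g²·∂₁(y) + t·(g·∂₁ f − f·∂₁ g) ≠ 0` for all `f` and all `g ∉ 𝔪`. -/
theorem statement11 {k : Type*} [Field k] (p : ℕ) [Fact p.Prime] [CharP k p]
    (n : ℕ) (hn : 2 ≤ n) (f g : MvPolynomial (Fin n ⊕ Fin 2) k)
    (hg : g ∉ Ideal.span
      (Set.range (X : Fin n ⊕ Fin 2 → MvPolynomial (Fin n ⊕ Fin 2) k))) :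
    g ^ 2 * statement11Derivation k n (X (Sum.inr 0)) +
        X (Sum.inr 1) *
          (g * statement11Derivation k n f - f * statement11Derivation k n g) ≠ 0 := by
  have hgc : constantCoeff g ≠ 0 := fun h => hg (statement11_mem_span n g h)
  have hy : statement11Derivation k n (X (Sum.inr 0)) = X (Sum.inr 1) := by
    rw [statement11Derivation, mkDerivation_X]; simp
  rw [hy]
  have key : g ^ 2 * X (Sum.inr 1) +
      X (Sum.inr 1) * (g * statement11Derivation k n f - f * statement11Derivation k n g)
      = X (Sum.inr 1) *
        (g ^ 2 + (g * statement11Derivation k n f - f * statement11Derivation k n g)) := by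
    ring
  rw [key]
  apply mul_ne_zero (MvPolynomial.X_ne_zero _)
  intro h0
  have := congrArg constantCoeff h0
  simp only [map_add, map_sub, map_mul, map_pow, statement11_constantCoeff_deriv,
    mul_zero, zero_mul, sub_zero, add_zero, map_zero] at this
  exact hgc (pow_eq_zero_iff two_ne_zero |>.mp this)
end
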